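/- arXiv:2302.02581 — 2 statements merged into one kernel-verified Lean document; each statement's English description precedes it below -/
import Mathlib

section
/- For every branch (x,f) ∈ [T] of the interleaved tree T and every n ∈ ℕ, the pair (x, f_n) is a branch of T_n, i.e. (x, f_n) ∈ [T_n]; in particular x ∈ p[T_n] for every n ∈ ℕ. -/
/-- The length-`k` initial segment of `x : ℕ → α`, as a list. -/
def restrict {α : Type*} (x : ℕ → α) (k : ℕ) : List α := (List.range k).map x

/-- `(x, f)` is a branch of the tree `T` on `ℕ × κ`. -/
def IsBranch {κ : Type*} (T : Set (List ℕ × List κ)) (x : ℕ → ℕ) (f : ℕ → κ) : Prop :=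
  ∀ k : ℕ, (restrict x k, restrict f k) ∈ T

/-- The projection `p[T]` of a tree `T` on `ℕ × κ`. -/
def proj {κ : Type*} (T : Set (List ℕ × List κ)) : Set (ℕ → ℕ) :=
  {x | ∃ f : ℕ → κ, IsBranch T x f}

/-- The tree `T_n` of a sequence of norms `φ i : A → κ`:
`{(x↾k, (φ i x)_{i<k}) : x ∈ A, k ∈ ℕ}`. -/
def normTree {κ : Type*} (A : Set (ℕ → ℕ)) (φ : ℕ → (ℕ → ℕ) → κ) :
    Set (List ℕ × List κ) :=
  {p | ∃ x ∈ A, ∃ k : ℕ, p = (restrict x k, (List.range k).map (fun i => φ i x))}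

/-- The interleaved tree `T`: `(s, u) ∈ T` (with `s, u` of length `k`) iff there is a real
`x` extending `s` with `x ∈ A i` for all `i < k` and `u i = φ i₀ i₁ x` for all `i < k`,
where `i ↦ (i₀, i₁)` is the unpairing bijection. -/
def interleavedTree {κ : Type*} (A : ℕ → Set (ℕ → ℕ)) (φ : ℕ → ℕ → (ℕ → ℕ) → κ) :
    Set (List ℕ × List κ) :=
  {p | ∃ (k : ℕ) (x : ℕ → ℕ), (∀ i < k, x ∈ A i) ∧
      p = (restrict x k,
           (List.range k).map (fun i => φ (Nat.unpair i).1 (Nat.unpair i).2 x))}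

lemma restrict_eq_apply {α : Type*} {g h : ℕ → α} {k : ℕ}
    (H : restrict g k = restrict h k) {i : ℕ} (hi : i < k) : g i = h i := by
  have := congrArg (fun l => l[i]?) H
  simpa [restrict, hi] using this

/-- for every branch `(x, f) ∈ [T]` of the interleaved tree and every `n`,
the pair `(x, fₙ)` with `fₙ i = f ⟨n, i⟩` is a branch of `Tₙ`; in particular
`x ∈ p[Tₙ]` for every `n`. -/
theorem branch_interleavedTree_branch_normTree {κ : Type*}
    (A : ℕ → Set (ℕ → ℕ)) (φ : ℕ → ℕ → (ℕ → ℕ) → κ)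
    (x : ℕ → ℕ) (f : ℕ → κ)
    (hxf : IsBranch (interleavedTree A φ) x f) (n : ℕ) :
    IsBranch (normTree (A n) (φ n)) x (fun i => f (Nat.pair n i)) ∧
    x ∈ proj (normTree (A n) (φ n)) := by
  have key : IsBranch (normTree (A n) (φ n)) x (fun i => f (Nat.pair n i)) := by
    intro k
    set K := Nat.pair n k + n + k + 1 with hK
    obtain ⟨K', y, hyA, hp⟩ := hxf K
    have hlen : K' = K := by
      have := congrArg (fun p : List ℕ × List κ => p.1.length) hp
      simpa [restrict] using this.symm
    subst hlen
    have h1 := congrArg Prod.fst hp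
    have h2 := congrArg Prod.snd hp
    simp only at h1 h2
    have hx : ∀ i < K, x i = y i := fun i hi =>
      restrict_eq_apply h1 hi
    have hf : ∀ i < K, f i = φ (Nat.unpair i).1 (Nat.unpair i).2 y := fun i hi =>
      restrict_eq_apply h2 hi
    refine ⟨y, hyA n (by omega), k, ?_⟩
    have hkK : k < K := by omega
    simp only [Prod.mk.injEq, restrict]
    refine ⟨?_, ?_⟩
    · apply List.map_congr_left
      intro i hi
      exact hx i (lt_trans (List.mem_range.mp hi) hkK)
    · apply List.map_congr_left
      intro i hi
      have hik : i < k := List.mem_range.mp hi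
      have hpair : Nat.pair n i < K := by
        have : Nat.pair n i < Nat.pair n k :=
          Nat.pair_lt_pair_right n hik
        omega
      have := hf (Nat.pair n i) hpair
      simpa [Nat.unpair_pair] using this
  exact ⟨key, ⟨fun i => f (Nat.pair n i), key⟩⟩
end

section
/- Let P be a nonempty preorder, let (C_j)_{j∈ℕ} be a sequence of dense open subsets of P×P, and let (E_j)_{j∈ℕ} be a sequence of dense open subsets of P. Then there exists a family of conditions (p_s)_{s∈2^{<ω}} such that: (1) if s is an initial segment of t then p_t ≤ p_s; (2) whenever s ≠ t have the same length n, then (p_s, p_t) ∈ C_j for every j ≤ n; (3) p_s ∈ E_j for every j ≤ length(s). Consequently, for all distinct x, y ∈ 2^ℕ and every j ∈ ℕ, (p_{x↾n}, p_{y↾n}) ∈ C_j for all sufficiently large n. (This is Claim 2 in the proof of the thin-equivalence-relation lemma: the construction of a perfect family of pairwise mutually generic descending sequences of conditions.) -/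
/-- A set `C ⊆ P × P` is dense open: every pair of conditions has a coordinatewise
extension in `C`, and `C` is closed under coordinatewise extension. -/
def DenseOpenPair {P : Type*} [Preorder P] (C : Set (P × P)) : Prop :=
  (∀ p q : P, ∃ p' ≤ p, ∃ q' ≤ q, (p', q') ∈ C) ∧
  (∀ p q p' q' : P, (p, q) ∈ C → p' ≤ p → q' ≤ q → (p', q') ∈ C)

/-- A set `E ⊆ P` is dense open: every condition has a lower bound in `E`, and `E` is
downward closed. -/
def DenseOpen {P : Type*} [Preorder P] (E : Set P) : Prop :=
  (∀ p : P, ∃ q ≤ p, q ∈ E) ∧ (∀ p q : P, p ∈ E → q ≤ p → q ∈ E)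

/-- The list of all binary lists of length `n`. -/
def allBinLists : ℕ → List (List Bool)
  | 0 => [[]]
  | n + 1 => ((allBinLists n).map (false :: ·)) ++ ((allBinLists n).map (true :: ·))

lemma mem_allBinLists : ∀ (n : ℕ) (s : List Bool), s ∈ allBinLists n ↔ s.length = n := by
  intro n
  induction n with
  | zero => intro s; simp [allBinLists, List.length_eq_zero_iff]
  | succ n ih =>
    intro s
    constructor
    · intro hs
      simp only [allBinLists, List.mem_append, List.mem_map] at hs
      rcases hs with ⟨t, ht, rfl⟩ | ⟨t, ht, rfl⟩ <;> simp [(ih t).mp ht]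
    · intro hs
      cases s with
      | nil => simp at hs
      | cons b t =>
        simp only [List.length_cons, Nat.add_right_cancel_iff] at hs
        cases b <;>
          · simp only [allBinLists, List.mem_append, List.mem_map]
            first
            | exact Or.inl ⟨t, (ih t).mpr hs, rfl⟩
            | exact Or.inr ⟨t, (ih t).mpr hs, rfl⟩

section Aux

variable {P : Type*} [Preorder P]

lemma denseOpenPair_bInter (C : ℕ → Set (P × P)) (hC : ∀ j, DenseOpenPair (C j)) (k : ℕ) :
    DenseOpenPair {z : P × P | ∀ j ≤ k, z ∈ C j} := by
  induction k with
  | zero =>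
    refine ⟨fun p q => ?_, fun p q p' q' h hp hq j hj => (hC j).2 p q p' q' (h j hj) hp hq⟩
    obtain ⟨p', hp', q', hq', h⟩ := (hC 0).1 p q
    refine ⟨p', hp', q', hq', fun j hj => ?_⟩
    obtain rfl : j = 0 := Nat.le_zero.mp hj
    exact h
  | succ k ih =>
    refine ⟨fun p q => ?_, fun p q p' q' h hp hq j hj => (hC j).2 p q p' q' (h j hj) hp hq⟩
    obtain ⟨p', hp', q', hq', h⟩ := ih.1 p q
    obtain ⟨p'', hp'', q'', hq'', h2⟩ := (hC (k + 1)).1 p' q'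
    refine ⟨p'', le_trans hp'' hp', q'', le_trans hq'' hq', fun j hj => ?_⟩
    rcases Nat.lt_succ_iff_lt_or_eq.mp (Nat.lt_succ_of_le hj) with hj' | rfl
    · exact (hC j).2 p' q' p'' q'' (h j (Nat.lt_succ_iff.mp hj')) hp'' hq''
    · exact h2

lemma denseOpen_bInter (E : ℕ → Set P) (hE : ∀ j, DenseOpen (E j)) (k : ℕ) :
    DenseOpen {a : P | ∀ j ≤ k, a ∈ E j} := by
  induction k with
  | zero =>
    refine ⟨fun p => ?_, fun p q h hq j hj => (hE j).2 p q (h j hj) hq⟩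
    obtain ⟨q, hq, h⟩ := (hE 0).1 p
    refine ⟨q, hq, fun j hj => ?_⟩
    obtain rfl : j = 0 := Nat.le_zero.mp hj
    exact h
  | succ k ih =>
    refine ⟨fun p => ?_, fun p q h hq j hj => (hE j).2 p q (h j hj) hq⟩
    obtain ⟨q, hq, h⟩ := ih.1 p
    obtain ⟨r, hr, h2⟩ := (hE (k + 1)).1 q
    refine ⟨r, le_trans hr hq, fun j hj => ?_⟩
    rcases Nat.lt_succ_iff_lt_or_eq.mp (Nat.lt_succ_of_le hj) with hj' | rfl
    · exact (hE j).2 q r (h j (Nat.lt_succ_iff.mp hj')) hr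
    · exact h2

/-- Extend a family of conditions so that all members indexed by a list land in a
dense open set. -/
lemma extend_family_single {ι : Type*} [DecidableEq ι] {E : Set P} (hE : DenseOpen E)
    (L : List ι) (q : ι → P) :
    ∃ q' : ι → P, (∀ i, q' i ≤ q i) ∧ ∀ i ∈ L, q' i ∈ E := by
  induction L with
  | nil => exact ⟨q, fun i => le_refl _, by simp⟩
  | cons a L ih =>
    obtain ⟨q', hq', hmem⟩ := ih
    obtain ⟨e, he, heE⟩ := hE.1 (q' a)
    refine ⟨Function.update q' a e, fun i => ?_, fun i hi => ?_⟩
    · by_cases hia : i = a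
      · subst hia; simp only [Function.update_self]; exact le_trans he (hq' i)
      · rw [Function.update_of_ne hia]; exact hq' i
    · by_cases hia : i = a
      · subst hia; simpa using heE
      · rw [Function.update_of_ne hia]
        rcases List.mem_cons.mp hi with rfl | hi'
        · exact absurd rfl hia
        · exact hmem i hi'

/-- Extend a family of conditions so that all (distinct-index) pairs indexed by a list
land in a dense open set of pairs. -/
lemma extend_family_pair {ι : Type*} [DecidableEq ι] {D : Set (P × P)} (hD : DenseOpenPair D)
    (L : List (ι × ι)) (q : ι → P) :
    ∃ q' : ι → P, (∀ i, q' i ≤ q i) ∧ ∀ z ∈ L, z.1 ≠ z.2 → (q' z.1, q' z.2) ∈ D := by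
  induction L with
  | nil => exact ⟨q, fun i => le_refl _, by simp⟩
  | cons z L ih =>
    obtain ⟨q', hq', hmem⟩ := ih
    obtain ⟨a, b⟩ := z
    by_cases hab : a = b
    · refine ⟨q', hq', fun w hw hne => ?_⟩
      rcases List.mem_cons.mp hw with rfl | hw'
      · exact absurd hab hne
      · exact hmem w hw' hne
    · obtain ⟨a', ha', b', hb', hD'⟩ := hD.1 (q' a) (q' b)
      set q'' : ι → P := Function.update (Function.update q' a a') b b' with hq''def
      have hle : ∀ i, q'' i ≤ q' i := by
        intro i
        by_cases hib : i = b
        · subst hib; simp only [hq''def, Function.update_self]; exact hb'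
        · rw [hq''def, Function.update_of_ne hib]
          by_cases hia : i = a
          · subst hia; simp only [Function.update_self]; exact ha'
          · rw [Function.update_of_ne hia]
      refine ⟨q'', fun i => le_trans (hle i) (hq' i), fun w hw hne => ?_⟩
      rcases List.mem_cons.mp hw with rfl | hw'
      · have h1 : q'' a = a' := by
          rw [hq''def, Function.update_of_ne hab, Function.update_self]
        have h2 : q'' b = b' := by rw [hq''def, Function.update_self]
        rw [h1, h2]; exact hD'
      · exact hD.2 _ _ _ _ (hmem w hw' hne) (hle w.1) (hle w.2)

lemma step_exists [Nonempty P] (C : ℕ → Set (P × P)) (hC : ∀ j, DenseOpenPair (C j))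
    (E : ℕ → Set P) (hE : ∀ j, DenseOpen (E j)) (q : List Bool → P) (n : ℕ) :
    ∃ q' : List Bool → P,
      (∀ s : List Bool, s.length = n + 1 → q' s ≤ q s.dropLast) ∧
      (∀ s t : List Bool, s.length = n + 1 → t.length = n + 1 → s ≠ t →
        ∀ j ≤ n + 1, (q' s, q' t) ∈ C j) ∧
      (∀ s : List Bool, s.length = n + 1 → ∀ j ≤ n + 1, q' s ∈ E j) := by
  have hD := denseOpenPair_bInter C hC (n + 1)
  have hEs := denseOpen_bInter E hE (n + 1)
  set q0 : List Bool → P := fun s => q s.dropLast with hq0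
  obtain ⟨q1, hq1le, hq1mem⟩ := extend_family_single hEs (allBinLists (n + 1)) q0
  set Lp : List (List Bool × List Bool) :=
    (allBinLists (n + 1)).flatMap (fun s => (allBinLists (n + 1)).map (fun t => (s, t)))
    with hLp
  obtain ⟨q2, hq2le, hq2mem⟩ := extend_family_pair hD Lp q1
  refine ⟨q2, fun s hs => le_trans (hq2le s) (hq1le s), fun s t hs ht hne j hj => ?_,
    fun s hs j hj => ?_⟩
  · have hmemL : (s, t) ∈ Lp := by
      rw [hLp]
      simp only [List.mem_flatMap, List.mem_map]
      exact ⟨s, (mem_allBinLists _ s).mpr hs, t, (mem_allBinLists _ t).mpr ht, rfl⟩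
    exact hq2mem (s, t) hmemL hne j hj
  · exact hEs.2 (q1 s) (q2 s) (hq1mem s ((mem_allBinLists _ s).mpr hs)) (hq2le s) j hj

lemma prefix_dropLast_of_ne {α : Type*} {s t : List α} (h : s <+: t) (hne : s ≠ t) :
    s <+: t.dropLast := by
  obtain ⟨r, rfl⟩ := h
  have hr : r ≠ [] := by rintro rfl; simp at hne
  rw [List.dropLast_append_of_ne_nil hr]
  exact ⟨r.dropLast, rfl⟩

end Aux

/-- given dense open `Cⱼ ⊆ P × P` and dense open `Eⱼ ⊆ P`, there is a family
of conditions `(p_s)_{s ∈ 2^{<ω}}` such that (1) `s ⊑ t → p_t ≤ p s`; (2) distinct `s, t`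
of the same length `n` satisfy `(p_s, p_t) ∈ Cⱼ` for all `j ≤ n`; (3) `p_s ∈ Eⱼ` for all
`j ≤ length s`. Consequently, for distinct `x, y ∈ 2^ℕ` and every `j`,
`(p_{x↾n}, p_{y↾n}) ∈ Cⱼ` for all sufficiently large `n`. -/
theorem exists_perfect_generic_family {P : Type*} [Preorder P] [Nonempty P]
    (C : ℕ → Set (P × P)) (hC : ∀ j : ℕ, DenseOpenPair (C j))
    (E : ℕ → Set P) (hE : ∀ j : ℕ, DenseOpen (E j)) :
    ∃ p : List Bool → P,
      (∀ s t : List Bool, s <+: t → p t ≤ p s) ∧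
      (∀ s t : List Bool, s ≠ t → s.length = t.length →
        ∀ j ≤ s.length, (p s, p t) ∈ C j) ∧
      (∀ s : List Bool, ∀ j ≤ s.length, p s ∈ E j) ∧
      (∀ x y : ℕ → Bool, x ≠ y → ∀ j : ℕ, ∃ N : ℕ, ∀ n ≥ N,
        (p ((List.range n).map x), p ((List.range n).map y)) ∈ C j) := by
  classical
  -- base: a condition in `E 0`
  obtain ⟨e0, _, he0⟩ := (hE 0).1 (Classical.arbitrary P)
  -- the step function, via choice
  choose step hstep1 hstep2 hstep3 using step_exists C hC E hE
  set F : ℕ → List Bool → P := fun n => Nat.rec (fun _ => e0) (fun n qn => step qn n) n with hF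
  have hFsucc : ∀ n, F (n + 1) = step (F n) n := fun n => rfl
  set p : List Bool → P := fun s => F s.length s with hp
  -- (1)
  have key1 : ∀ (n : ℕ) (t : List Bool), t.length = n → ∀ s : List Bool, s <+: t →
      F t.length t ≤ F s.length s := by
    intro n
    induction n with
    | zero =>
      intro t ht s hs
      obtain rfl : t = [] := List.length_eq_zero_iff.mp ht
      obtain rfl : s = [] := List.prefix_nil.mp hs
      exact le_refl _
    | succ n ih =>
      intro t ht s hs
      by_cases hst : s = t
      · subst hst; exact le_refl _
      · have h1 : F t.length t ≤ F n t.dropLast := by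
          rw [ht, hFsucc]
          exact hstep1 (F n) n t ht
        have h2 : t.dropLast.length = n := by
          rw [List.length_dropLast, ht]; rfl
        have h3 : F t.dropLast.length t.dropLast ≤ F s.length s :=
          ih t.dropLast h2 s (prefix_dropLast_of_ne hs hst)
        rw [h2] at h3
        exact le_trans h1 h3
  refine ⟨p, fun s t hst => key1 t.length t rfl s hst, ?_, ?_, ?_⟩
  · -- (2)
    intro s t hne hlen j hj
    cases hsl : s.length with
    | zero =>
      exfalso
      have hs0 : s = [] := List.length_eq_zero_iff.mp hsl
      have ht0 : t = [] := List.length_eq_zero_iff.mp (hlen ▸ hsl)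
      exact hne (hs0.trans ht0.symm)
    | succ n =>
      have htl : t.length = n + 1 := hlen ▸ hsl
      have := hstep2 (F n) n s t hsl htl hne j (hsl ▸ hj)
      show (F s.length s, F t.length t) ∈ C j
      rw [hsl, htl, hFsucc]
      exact this
  · -- (3)
    intro s j hj
    cases hsl : s.length with
    | zero =>
      show F s.length s ∈ E j
      obtain rfl : j = 0 := Nat.le_zero.mp (hsl ▸ hj)
      rw [hsl]
      exact he0
    | succ n =>
      show F s.length s ∈ E j
      rw [hsl, hFsucc]
      exact hstep3 (F n) n s hsl j (hsl ▸ hj)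
  · -- (4)
    intro x y hxy j
    obtain ⟨m, hm⟩ : ∃ m, x m ≠ y m := by
      by_contra h
      push_neg at h
      exact hxy (funext h)
    refine ⟨max (m + 1) j, fun n hn => ?_⟩
    have hmn : m < n := lt_of_lt_of_le (Nat.lt_succ_self m) (le_trans (le_max_left _ _) hn)
    have hjn : j ≤ n := le_trans (le_max_right _ _) hn
    have hne : (List.range n).map x ≠ (List.range n).map y := by
      intro h
      apply hm
      have := congrArg (fun l => l[m]?) h
      simp only [List.getElem?_map] at this
      rw [List.getElem?_range hmn] at this
      simpa using this
    have hlen : ((List.range n).map x).length = ((List.range n).map y).length := by simp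
    have hxlen : ((List.range n).map x).length = n := by simp
    -- apply (2)
    cases n with
    | zero => omega
    | succ n' =>
      show (F _ _, F _ _) ∈ C j
      rw [show ((List.range (n'+1)).map x).length = n' + 1 by simp,
        show ((List.range (n'+1)).map y).length = n' + 1 by simp, hFsucc]
      exact hstep2 (F n') n' _ _ (by simp) (by simp) hne j (by omega)
end
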